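/- arXiv:2506.00059 — 2 statements merged into one kernel-verified Lean document; each statement's English description precedes it below -/
import Mathlib

section
/- Let p = (W, z(0), γ, π) be SIS parameters with W symmetric and nonnegative, γ nonnegative, z(0) ∈ [0,1]ⁿ, and trajectory z. Suppose p is block regular with partition V₁,…,V_K of V = {1,…,n}, i.e., for each block z(0) and γ are constant on the block and for all blocks V_k, V_l and all i₁, i₂ ∈ V_k one has Σ_{j ∈ V_l} a_{i₁ j} = Σ_{j ∈ V_l} a_{i₂ j}, where A = WΠ = (a_{ij}). Then for every block V_k and all i₁, i₂ ∈ V_k, z_{i₁}(t) = z_{i₂}(t) for all t ≥ 0. In particular, if some block contains two distinct indices i₁ ≠ i₂, the nonzero vector v with v_{i₁} = 1, v_{i₂} = −1 and all other entries 0 satisfies ⟨v, z(t)⟩ = 0 for all t ≥ 0. -/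
/-!
The spread of `z(t)` over pairs of vertices in a common block vanishes at `t = 0`. Since the
row sums of `A` over every block only depend on the block of the row, `A` maps block-constant
vectors to block-constant vectors, so for `x ∈ [0,1]ⁿ` the differences of the SIS vector field
inside a block are bounded by a constant times the spread of `x`. Grönwall's inequality then
keeps the spread at zero for all `t ≥ 0`.
-/

open Finset Set Matrix

theorem Finset.sum_mul_comp_eq_sum_fiberwise {ι κ R : Type*} [Fintype ι] [Fintype κ]
    [DecidableEq κ] [NonUnitalNonAssocSemiring R] (P : ι → κ) (a : ι → R) (g : κ → R) :
    ∑ j, a j * g (P j) = ∑ l, (∑ j with P j = l, a j) * g l := by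
  rw [← sum_fiberwise univ P]
  refine sum_congr rfl fun l _ => ?_
  rw [sum_mul]
  exact sum_congr rfl fun j hj => by rw [(mem_filter.1 hj).2]

theorem sum_ite_one_ite_neg_one_mul {ι R : Type*} [Fintype ι] [DecidableEq ι] [Ring R]
    {i₁ i₂ : ι} (hne : i₁ ≠ i₂) (x : ι → R) :
    ∑ j, (if j = i₁ then (1 : R) else if j = i₂ then -1 else 0) * x j = x i₁ - x i₂ := by
  simp [ite_mul, Finset.sum_ite, Finset.filter_eq', hne.symm, sub_eq_add_neg]

variable {ι κ : Type*}

abbrev SameBlock (P : ι → κ) := {p : ι × ι // P p.1 = P p.2}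

/-- For finite `ι`, the sup norm of `blockDiff P x` is the largest difference of two entries of
`x` in a common block of `P`. -/
def blockDiff (P : ι → κ) : (ι → ℝ) →L[ℝ] (SameBlock P → ℝ) :=
  ContinuousLinearMap.pi fun p =>
    ContinuousLinearMap.proj (R := ℝ) (φ := fun _ : ι => ℝ) p.1.1 - ContinuousLinearMap.proj p.1.2

@[simp] theorem blockDiff_apply (P : ι → κ) (x : ι → ℝ) (p : SameBlock P) :
    blockDiff P x p = x p.1.1 - x p.1.2 := rfl

theorem blockDiff_eq_zero_iff {P : ι → κ} {x : ι → ℝ} :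
    blockDiff P x = 0 ↔ ∀ i i', P i = P i' → x i = x i' := by
  simp [funext_iff, sub_eq_zero]

theorem abs_sub_le_norm_blockDiff [Fintype ι] [DecidableEq κ] {P : ι → κ} (x : ι → ℝ)
    {i i' : ι} (h : P i = P i') : |x i - x i'| ≤ ‖blockDiff P x‖ :=
  norm_le_pi_norm (blockDiff P x) ⟨(i, i'), h⟩

namespace Matrix

theorem abs_mulVec_le [Fintype ι] {A : Matrix ι ι ℝ} {R M : ℝ} (hR : ∀ i, ∑ j, |A i j| ≤ R)
    {v : ι → ℝ} (hv : ∀ j, |v j| ≤ M) (i : ι) : |(A *ᵥ v) i| ≤ R * M := by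
  have hM : 0 ≤ M := (abs_nonneg _).trans (hv i)
  calc |(A *ᵥ v) i| ≤ ∑ j, |A i j| * |v j| := by
        simpa only [mulVec, dotProduct, abs_mul] using abs_sum_le_sum_abs (fun j => A i j * v j) _
    _ ≤ ∑ j, |A i j| * M := by gcongr with j; exact hv j
    _ = (∑ j, |A i j|) * M := (sum_mul ..).symm
    _ ≤ R * M := by gcongr; exact hR i

/-- The row-sum condition of block regularity: the partition by `P` is equitable for `A`. -/
def IsEquitable [Fintype ι] [DecidableEq κ] (A : Matrix ι ι ℝ) (P : ι → κ) : Prop :=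
  ∀ i i', P i = P i' → ∀ l, ∑ j with P j = l, A i j = ∑ j with P j = l, A i' j

section IsEquitable

variable [Fintype ι] [Fintype κ] [DecidableEq κ] {A : Matrix ι ι ℝ} {P : ι → κ}

theorem IsEquitable.mulVec_comp_eq (hA : A.IsEquitable P) {i i' : ι} (h : P i = P i')
    (g : κ → ℝ) : (A *ᵥ (g ∘ P)) i = (A *ᵥ (g ∘ P)) i' := by
  simp only [mulVec, dotProduct, Function.comp_apply]
  rw [sum_mul_comp_eq_sum_fiberwise P (A i), sum_mul_comp_eq_sum_fiberwise P (A i')]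
  simp only [hA i i' h]

theorem IsEquitable.abs_mulVec_sub_le (hA : A.IsEquitable P) {R : ℝ}
    (hR : ∀ i, ∑ j, |A i j| ≤ R) (x : ι → ℝ) {i i' : ι} (h : P i = P i') :
    |(A *ᵥ x) i - (A *ᵥ x) i'| ≤ 2 * R * ‖blockDiff P x‖ := by
  have : Nonempty ι := ⟨i⟩
  -- `A` does not separate `i` from `i'` on the block-constant vector `g ∘ P`.
  set g : κ → ℝ := x ∘ Function.invFun P
  have hy : ∀ j, |(x - g ∘ P) j| ≤ ‖blockDiff P x‖ := fun j =>
    abs_sub_le_norm_blockDiff x (Function.invFun_eq ⟨j, rfl⟩).symm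
  have hsplit : (A *ᵥ x) i - (A *ᵥ x) i' = (A *ᵥ (x - g ∘ P)) i - (A *ᵥ (x - g ∘ P)) i' := by
    simp only [mulVec_sub, Pi.sub_apply, hA.mulVec_comp_eq h g]
    ring
  rw [hsplit, two_mul, add_mul]
  exact (abs_sub _ _).trans (add_le_add (abs_mulVec_le hR hy i) (abs_mulVec_le hR hy i'))

end IsEquitable

end Matrix

def sisField [Fintype ι] (A : Matrix ι ι ℝ) (γ x : ι → ℝ) : ι → ℝ :=
  fun i => (1 - x i) * (A *ᵥ x) i - γ i * x i

section SIS

variable [Fintype ι] [Fintype κ] [DecidableEq κ] {A : Matrix ι ι ℝ} {P : ι → κ} {γ : ι → ℝ}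

theorem abs_sisField_sub_le (hA : A.IsEquitable P) (hγ : ∀ i i', P i = P i' → γ i = γ i')
    {R G : ℝ} (hR : ∀ i, ∑ j, |A i j| ≤ R) (hG : ∀ i, |γ i| ≤ G) {x : ι → ℝ}
    (hx : ∀ j, x j ∈ Icc (0 : ℝ) 1) {i i' : ι} (h : P i = P i') :
    |sisField A γ x i - sisField A γ x i'| ≤ (3 * R + G) * ‖blockDiff P x‖ := by
  set δ := ‖blockDiff P x‖
  have hxx : |x i - x i'| ≤ δ := abs_sub_le_norm_blockDiff x h
  have hAx : |(A *ᵥ x) i| ≤ R * 1 :=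
    abs_mulVec_le hR (fun j => abs_le.2 ⟨by linarith [(hx j).1], (hx j).2⟩) i
  have hAxx : |(A *ᵥ x) i - (A *ᵥ x) i'| ≤ 2 * R * δ := hA.abs_mulVec_sub_le hR x h
  have hx' : |1 - x i'| ≤ 1 := abs_le.2 ⟨by linarith [(hx i').2], by linarith [(hx i').1]⟩
  have hγi : |γ i| ≤ G := hG i
  calc |sisField A γ x i - sisField A γ x i'|
      = |(1 - x i') * ((A *ᵥ x) i - (A *ᵥ x) i') - (x i - x i') * (A *ᵥ x) i
          - γ i * (x i - x i')| := by
        rw [sisField, sisField, hγ i i' h]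
        congr 1
        ring
    _ ≤ |1 - x i'| * |(A *ᵥ x) i - (A *ᵥ x) i'| + |x i - x i'| * |(A *ᵥ x) i|
          + |γ i| * |x i - x i'| := by
        simp only [← abs_mul]
        exact (abs_sub _ _).trans (add_le_add_left (abs_sub _ _) _)
    _ ≤ 1 * (2 * R * δ) + δ * (R * 1) + G * δ := by
        gcongr
        exact (abs_nonneg _).trans hγi
    _ = (3 * R + G) * δ := by ring

theorem exists_norm_blockDiff_sisField_le (hA : A.IsEquitable P)
    (hγ : ∀ i i', P i = P i' → γ i = γ i') :
    ∃ C, ∀ x : ι → ℝ, (∀ j, x j ∈ Icc (0 : ℝ) 1) →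
      ‖blockDiff P (sisField A γ x)‖ ≤ C * ‖blockDiff P x‖ := by
  have hR : ∀ i, ∑ j, |A i j| ≤ ∑ i, ∑ j, |A i j| := fun i =>
    single_le_sum (f := fun i => ∑ j, |A i j|) (fun i _ => sum_nonneg fun j _ => abs_nonneg _)
      (mem_univ i)
  have hG : ∀ i, |γ i| ≤ ∑ i, |γ i| := fun i =>
    single_le_sum (fun i _ => abs_nonneg (γ i)) (mem_univ i)
  refine ⟨3 * ∑ i, ∑ j, |A i j| + ∑ i, |γ i|, fun x hx => ?_⟩
  refine (pi_norm_le_iff_of_nonneg (by positivity)).2 fun p => ?_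
  rw [Real.norm_eq_abs, blockDiff_apply]
  exact abs_sisField_sub_le hA hγ hR hG hx p.2

theorem blockDiff_eq_zero_of_sis_trajectory (hA : A.IsEquitable P)
    (hγ : ∀ i i', P i = P i' → γ i = γ i') {z : ℝ → ι → ℝ}
    (hz : ∀ t ∈ Ici (0 : ℝ), HasDerivWithinAt z (sisField A γ (z t)) (Ici 0) t)
    (hz01 : ∀ t ∈ Ici (0 : ℝ), ∀ i, z t i ∈ Icc (0 : ℝ) 1)
    (h0 : blockDiff P (z 0) = 0) {t : ℝ} (ht : 0 ≤ t) : blockDiff P (z t) = 0 := by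
  obtain ⟨C, hC⟩ := exists_norm_blockDiff_sisField_le hA hγ
  have hderiv : ∀ s ∈ Ici (0 : ℝ), HasDerivWithinAt (fun s => blockDiff P (z s))
      (blockDiff P (sisField A γ (z s))) (Ici 0) s :=
    fun s hs => (blockDiff P).hasFDerivAt.comp_hasDerivWithinAt s (hz s hs)
  exact eq_zero_of_abs_deriv_le_mul_abs_self_of_eq_zero_right
    (fun s hs => (hderiv s hs.1).continuousWithinAt.mono Icc_subset_Ici_self)
    (fun s hs => (hderiv s hs.1).mono (Ici_subset_Ici.2 hs.1)) h0
    (fun s hs => hC _ (hz01 s hs.1)) t ⟨ht, le_rfl⟩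

end SIS

theorem stmt_7_general {n : ℕ} (W : Matrix (Fin n) (Fin n) ℝ) (pv γ : Fin n → ℝ)
    (z : ℝ → Fin n → ℝ)
    (hode : ∀ i, ∀ t ∈ Set.Ici (0 : ℝ), HasDerivWithinAt (fun s => z s i)
      ((1 - z t i) * (∑ j, W i j * pv j * z t j) - γ i * z t i) (Set.Ici 0) t)
    (hz01 : ∀ t ∈ Set.Ici (0 : ℝ), ∀ i, z t i ∈ Set.Icc (0 : ℝ) 1)
    (K : ℕ) (P : Fin n → Fin K)
    (hz0blk : ∀ i₁ i₂, P i₁ = P i₂ → z 0 i₁ = z 0 i₂)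
    (hγblk : ∀ i₁ i₂, P i₁ = P i₂ → γ i₁ = γ i₂)
    (hrowblk : ∀ i₁ i₂, P i₁ = P i₂ → ∀ l : Fin K,
      ∑ j ∈ Finset.univ.filter (fun j => P j = l), W i₁ j * pv j =
      ∑ j ∈ Finset.univ.filter (fun j => P j = l), W i₂ j * pv j) :
    (∀ t ≥ (0 : ℝ), ∀ i₁ i₂, P i₁ = P i₂ → z t i₁ = z t i₂) ∧
    (∀ i₁ i₂ : Fin n, i₁ ≠ i₂ → P i₁ = P i₂ →
      (fun j => if j = i₁ then (1 : ℝ) else if j = i₂ then -1 else 0) ≠ 0 ∧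
      ∀ t ≥ (0 : ℝ),
        ∑ j, (if j = i₁ then (1 : ℝ) else if j = i₂ then -1 else 0) * z t j = 0) := by
  set A : Matrix (Fin n) (Fin n) ℝ := W * diagonal pv
  have hA_apply : ∀ i j, A i j = W i j * pv j := fun i j => mul_diagonal pv W i j
  have hA : A.IsEquitable P := by simpa only [IsEquitable, hA_apply] using hrowblk
  have hz : ∀ t ∈ Ici (0 : ℝ), HasDerivWithinAt z (sisField A γ (z t)) (Ici 0) t := fun t ht =>
    hasDerivWithinAt_pi.2 fun i => by
      simpa only [sisField, mulVec, dotProduct, hA_apply] using hode i t ht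
  have hblock : ∀ t ≥ (0 : ℝ), ∀ i₁ i₂, P i₁ = P i₂ → z t i₁ = z t i₂ := fun t ht =>
    blockDiff_eq_zero_iff.1 <| blockDiff_eq_zero_of_sis_trajectory hA hγblk hz hz01
      (blockDiff_eq_zero_iff.2 hz0blk) ht
  refine ⟨hblock, fun i₁ i₂ hne hP => ⟨fun hv => by simpa using congrFun hv i₁, fun t ht => ?_⟩⟩
  rw [sum_ite_one_ite_neg_one_mul hne, hblock t ht i₁ i₂ hP, sub_self]

/-- If the SIS parameters are block regular (with block map `P : Fin n → Fin K`),
then the trajectory is constant on blocks for all `t ≥ 0`; in particular for two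
distinct indices `i₁ ≠ i₂` in the same block, the nonzero vector `v` with
`v_{i₁} = 1`, `v_{i₂} = −1`, zero elsewhere, satisfies `⟨v, z(t)⟩ = 0` for all
`t ≥ 0`. -/
theorem stmt_7 {n : ℕ} (W : Matrix (Fin n) (Fin n) ℝ) (pv γ : Fin n → ℝ)
    (z : ℝ → Fin n → ℝ)
    (hWsymm : W.IsSymm) (hWpos : ∀ i j, 0 ≤ W i j)
    (hpv : ∀ i, 0 ≤ pv i) (hpv1 : ∑ i, pv i = 1) (hγ : ∀ i, 0 ≤ γ i)
    (hz0 : ∀ i, z 0 i ∈ Set.Icc (0 : ℝ) 1)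
    (hode : ∀ i, ∀ t ∈ Set.Ici (0 : ℝ), HasDerivWithinAt (fun s => z s i)
      ((1 - z t i) * (∑ j, W i j * pv j * z t j) - γ i * z t i) (Set.Ici 0) t)
    (hz01 : ∀ t ∈ Set.Ici (0 : ℝ), ∀ i, z t i ∈ Set.Icc (0 : ℝ) 1)
    (K : ℕ) (P : Fin n → Fin K)
    (hz0blk : ∀ i₁ i₂, P i₁ = P i₂ → z 0 i₁ = z 0 i₂)
    (hγblk : ∀ i₁ i₂, P i₁ = P i₂ → γ i₁ = γ i₂)
    (hrowblk : ∀ i₁ i₂, P i₁ = P i₂ → ∀ l : Fin K,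
      ∑ j ∈ Finset.univ.filter (fun j => P j = l), W i₁ j * pv j =
      ∑ j ∈ Finset.univ.filter (fun j => P j = l), W i₂ j * pv j) :
    (∀ t ≥ (0 : ℝ), ∀ i₁ i₂, P i₁ = P i₂ → z t i₁ = z t i₂) ∧
    (∀ i₁ i₂ : Fin n, i₁ ≠ i₂ → P i₁ = P i₂ →
      (fun j => if j = i₁ then (1 : ℝ) else if j = i₂ then -1 else 0) ≠ 0 ∧
      ∀ t ≥ (0 : ℝ),
        ∑ j, (if j = i₁ then (1 : ℝ) else if j = i₂ then -1 else 0) * z t j = 0) :=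
  stmt_7_general W pv γ z hode hz01 K P hz0blk hγblk hrowblk
end

section
/- Let 0 < m ≤ 1/2, m ≤ M, and let p = (W, z(0), 0, π) be SI parameters (γ = 0) with m ≤ w_{ij} = w_{ji} ≤ M and m ≤ z_i(0) ≤ 1−m for all i, j, and Σ_i π_i = 1 with π_i ≥ 0. Then the trajectory z satisfies, for every i and every t ≥ 0: (A z(t))_i ≥ m² and 1 − z_i(t) ≤ e^{−m² t}, where A = WΠ. -/
/-!
Every term of `z_i' = (1 - z_i) (A z)_i` is nonnegative, so each `z_i` is nondecreasing and stays
above `m`. Hence `(A z)_i ≥ Σ_j m · π_j · m = m²`, and `u = 1 - z_i ≥ 0` satisfies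
`u' = -(A z)_i u ≤ -m² u`, so Grönwall's inequality gives `u(t) ≤ u(0) e^{-m² t} ≤ e^{-m² t}`.
-/

open Set

theorem monotoneOn_Ici_of_hasDerivWithinAt_nonneg {f f' : ℝ → ℝ} {a : ℝ}
    (hf : ∀ t ∈ Ici a, HasDerivWithinAt f (f' t) (Ici a) t) (hf' : ∀ t ∈ Ioi a, 0 ≤ f' t) :
    MonotoneOn f (Ici a) := by
  refine monotoneOn_of_hasDerivWithinAt_nonneg (f' := f') (convex_Ici a)
    (fun t ht => (hf t ht).continuousWithinAt) (fun t ht => ?_) (fun t ht => ?_)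
  · rw [interior_Ici] at ht ⊢
    exact (hf t (Ioi_subset_Ici_self ht)).mono Ioi_subset_Ici_self
  · exact hf' t (by rwa [interior_Ici] at ht)

theorem le_mul_exp_of_hasDerivWithinAt_le_neg_mul {u u' : ℝ → ℝ} {c δ : ℝ}
    (hu : ∀ t ∈ Ici (0 : ℝ), HasDerivWithinAt u (u' t) (Ici 0) t)
    (hu' : ∀ t ∈ Ici (0 : ℝ), u' t ≤ -c * u t) (hu0 : u 0 ≤ δ) {t : ℝ} (ht : 0 ≤ t) :
    u t ≤ δ * Real.exp (-c * t) := by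
  have hgronwall := le_gronwallBound_of_liminf_deriv_right_le
    (f' := u') (K := -c) (ε := 0) (b := t)
    (fun s hs => ((hu s hs.1).continuousWithinAt).mono Icc_subset_Ici_self)
    (fun s hs _ hr => ((hu s hs.1).mono (Ici_subset_Ici.2 hs.1)).liminf_right_slope_le hr)
    hu0 (fun s hs => by simpa only [add_zero] using hu' s hs.1) t ⟨ht, le_rfl⟩
  simpa [gronwallBound_ε0] using hgronwall

theorem sq_le_sum_mul_mul_of_le {ι : Type*} [Fintype ι] {m : ℝ} (hm : 0 ≤ m)
    (w p x : ι → ℝ) (hw : ∀ j, m ≤ w j) (hp : ∀ j, 0 ≤ p j) (hp1 : ∑ j, p j = 1)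
    (hx : ∀ j, m ≤ x j) :
    m ^ 2 ≤ ∑ j, w j * p j * x j :=
  calc m ^ 2 = ∑ j, m * p j * m := by rw [← Finset.sum_mul, ← Finset.mul_sum, hp1]; ring
    _ ≤ ∑ j, w j * p j * x j := Finset.sum_le_sum fun j _ => by
      have hmx : m * m ≤ w j * x j := mul_le_mul (hw j) (hx j) hm (hm.trans (hw j))
      nlinarith [hp j]

theorem monotoneOn_SI_trajectory {n : ℕ} {W : Matrix (Fin n) (Fin n) ℝ} {pv : Fin n → ℝ}
    {z : ℝ → Fin n → ℝ} (hW : ∀ i j, 0 ≤ W i j) (hpv : ∀ i, 0 ≤ pv i)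
    (hode : ∀ i, ∀ t ∈ Ici (0 : ℝ), HasDerivWithinAt (fun s => z s i)
      ((1 - z t i) * (∑ j, W i j * pv j * z t j)) (Ici 0) t)
    (hz01 : ∀ t ∈ Ici (0 : ℝ), ∀ i, z t i ∈ Icc (0 : ℝ) 1) (i : Fin n) :
    MonotoneOn (fun s => z s i) (Ici 0) := by
  refine monotoneOn_Ici_of_hasDerivWithinAt_nonneg (hode i) fun t ht => ?_
  have hz := hz01 t (Ioi_subset_Ici_self ht)
  exact mul_nonneg (sub_nonneg.2 (hz i).2)
    (Finset.sum_nonneg fun j _ => mul_nonneg (mul_nonneg (hW i j) (hpv j)) (hz j).1)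

theorem stmt_9_general {n : ℕ} (m M : ℝ) (hm : 0 < m)
    (W : Matrix (Fin n) (Fin n) ℝ) (pv : Fin n → ℝ)
    (z : ℝ → Fin n → ℝ)
    (hWb : ∀ i j, W i j ∈ Set.Icc m M)
    (hz0 : ∀ i, z 0 i ∈ Set.Icc m (1 - m))
    (hpv : ∀ i, 0 ≤ pv i) (hpv1 : ∑ i, pv i = 1)
    (hode : ∀ i, ∀ t ∈ Set.Ici (0 : ℝ), HasDerivWithinAt (fun s => z s i)
      ((1 - z t i) * (∑ j, W i j * pv j * z t j)) (Set.Ici 0) t)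
    (hz01 : ∀ t ∈ Set.Ici (0 : ℝ), ∀ i, z t i ∈ Set.Icc (0 : ℝ) 1) :
    ∀ i : Fin n, ∀ t ≥ (0 : ℝ),
      m ^ 2 ≤ (∑ j, W i j * pv j * z t j) ∧
      1 - z t i ≤ Real.exp (-(m ^ 2) * t) := by
  have hz_ge : ∀ t ∈ Ici (0 : ℝ), ∀ j, m ≤ z t j := fun t ht j =>
    (hz0 j).1.trans <| monotoneOn_SI_trajectory (fun i j => hm.le.trans (hWb i j).1) hpv hode
      hz01 j self_mem_Ici ht ht
  have hforce : ∀ t ∈ Ici (0 : ℝ), ∀ i, m ^ 2 ≤ ∑ j, W i j * pv j * z t j := fun t ht i =>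
    sq_le_sum_mul_mul_of_le hm.le _ pv _ (fun j => (hWb i j).1) hpv hpv1 (hz_ge t ht)
  intro i t ht
  refine ⟨hforce t ht i, ?_⟩
  have hdecay := le_mul_exp_of_hasDerivWithinAt_le_neg_mul (c := m ^ 2) (δ := 1)
    (fun s hs => (hode i s hs).const_sub 1)
    (fun s hs => by nlinarith [hforce s hs i, (hz01 s hs i).2]) (by linarith [(hz0 i).1]) ht
  simpa using hdecay

/-- SI model (`γ = 0`) with `m ≤ w_{ij} ≤ M` and `m ≤ z_i(0) ≤ 1 − m`:
for every `i` and every `t ≥ 0`, `(A z(t))_i ≥ m²` and `1 − z_i(t) ≤ e^{−m² t}`. -/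
theorem stmt_9 {n : ℕ} (m M : ℝ) (hm : 0 < m) (hm2 : m ≤ 1 / 2) (hmM : m ≤ M)
    (W : Matrix (Fin n) (Fin n) ℝ) (pv : Fin n → ℝ)
    (z : ℝ → Fin n → ℝ)
    (hWsymm : W.IsSymm) (hWb : ∀ i j, W i j ∈ Set.Icc m M)
    (hz0 : ∀ i, z 0 i ∈ Set.Icc m (1 - m))
    (hpv : ∀ i, 0 ≤ pv i) (hpv1 : ∑ i, pv i = 1)
    (hode : ∀ i, ∀ t ∈ Set.Ici (0 : ℝ), HasDerivWithinAt (fun s => z s i)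
      ((1 - z t i) * (∑ j, W i j * pv j * z t j)) (Set.Ici 0) t)
    (hz01 : ∀ t ∈ Set.Ici (0 : ℝ), ∀ i, z t i ∈ Set.Icc (0 : ℝ) 1) :
    ∀ i : Fin n, ∀ t ≥ (0 : ℝ),
      m ^ 2 ≤ (∑ j, W i j * pv j * z t j) ∧
      1 - z t i ≤ Real.exp (-(m ^ 2) * t) :=
  stmt_9_general m M hm W pv z hWb hz0 hpv hpv1 hode hz01
end
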